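/- arXiv:1908.04179 — 3 statements merged into one kernel-verified Lean document; each statement's English description precedes it below -/
import Mathlib

section
/- If (Y, Z) is centered bivariate normal with standard deviations σ_y, σ_z > 0 and correlation ξ with |ξ| < 1, and f denotes its density, then ∫₀^∞ ∫₀^∞ 2|y - z| f(y,z) dy dz = (1/√(2π))·(-(1-ξ)(σ_y + σ_z) + 2√(σ_y² - 2ξσ_yσ_z + σ_z²)). -/
/-!
Given `Z = z`, the density in `y` is a Gaussian with mean `m = ξ σy z / σz` and standard
deviation `τ = σy √(1 - ξ²)`. With the Gaussian tail `Ψ x = ∫_x^∞ e^{-t²/2} dt` (`gaussTail`),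
`H y = (z - m) τ Ψ((y - m)/τ) - τ² e^{-((y - m)/τ)²/2}` is an antiderivative of
`(y - z) e^{-((y - m)/τ)²/2}` vanishing at `+∞`, so splitting `|y - z|` at `y = z` gives the inner
integral as `H 0 - 2 H z`. It is a combination of `e^{-(z/σz)²/2} e^{-(c z)²/2}` and
`z e^{-(z/σz)²/2} Ψ(c z)`; the first are Gaussian integrals, and the second are computed by parts
against `z e^{-(z/σz)²/2} = -σz² d/dz e^{-(z/σz)²/2}`.
-/

open Real

/-- Centered bivariate normal density with standard deviations `σy, σz` and correlation `ξ`. -/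
noncomputable def bvnDensity (σy σz ξ y z : ℝ) : ℝ :=
  (1 / (2 * π * Real.sqrt (1 - ξ ^ 2) * σy * σz)) *
    Real.exp (-(1 / (2 * (1 - ξ ^ 2))) *
      (y ^ 2 / σy ^ 2 - 2 * ξ * y * z / (σy * σz) + z ^ 2 / σz ^ 2))

open MeasureTheory Set Filter Topology

lemma exp_neg_sq_div_two_eq (t : ℝ) : exp (-t ^ 2 / 2) = exp (-(1 / 2) * t ^ 2) := by
  ring_nf

lemma integrable_exp_neg_sq_div_two : Integrable fun t : ℝ ↦ exp (-t ^ 2 / 2) := by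
  simpa only [exp_neg_sq_div_two_eq] using integrable_exp_neg_mul_sq (b := 1 / 2) (by norm_num)

lemma tendsto_exp_neg_sq_div_two_atTop : Tendsto (fun t : ℝ ↦ exp (-t ^ 2 / 2)) atTop (𝓝 0) := by
  refine tendsto_exp_atBot.comp ?_
  have h : Tendsto (fun t : ℝ ↦ t ^ 2 / 2) atTop atTop :=
    (tendsto_pow_atTop two_ne_zero).atTop_div_const two_pos
  simpa only [Function.comp_def, neg_div] using tendsto_neg_atTop_atBot.comp h

noncomputable def gaussTail (x : ℝ) : ℝ := ∫ t in Ioi x, exp (-t ^ 2 / 2)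

lemma gaussTail_zero : gaussTail 0 = √(2 * π) / 2 := by
  rw [gaussTail]
  simp only [exp_neg_sq_div_two_eq, integral_gaussian_Ioi]
  congr 2
  ring

lemma gaussTail_nonneg (x : ℝ) : 0 ≤ gaussTail x :=
  setIntegral_nonneg measurableSet_Ioi fun _ _ ↦ (exp_pos _).le

lemma gaussTail_le (x : ℝ) : gaussTail x ≤ √(2 * π) := by
  have h := integral_gaussian (1 / 2)
  rw [show π / (1 / 2) = 2 * π by ring] at h
  rw [← h, gaussTail]
  simp only [← exp_neg_sq_div_two_eq]
  exact setIntegral_le_integral integrable_exp_neg_sq_div_two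
    (Eventually.of_forall fun _ ↦ (exp_pos _).le)

lemma norm_gaussTail_le (x : ℝ) : ‖gaussTail x‖ ≤ √(2 * π) := by
  rw [Real.norm_of_nonneg (gaussTail_nonneg x)]
  exact gaussTail_le x

lemma gaussTail_eq_sub (x : ℝ) :
    gaussTail x = gaussTail 0 - ∫ t in 0..x, exp (-t ^ 2 / 2) := by
  rw [gaussTail, gaussTail, ← intervalIntegral.integral_Ioi_sub_Ioi'
    integrable_exp_neg_sq_div_two.integrableOn integrable_exp_neg_sq_div_two.integrableOn]
  ring

lemma hasDerivAt_gaussTail (x : ℝ) : HasDerivAt gaussTail (-exp (-x ^ 2 / 2)) x := by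
  have hcont : Continuous fun t : ℝ ↦ exp (-t ^ 2 / 2) := by fun_prop
  have h := (intervalIntegral.integral_hasDerivAt_right (a := 0) (b := x)
    integrable_exp_neg_sq_div_two.intervalIntegrable
    hcont.aestronglyMeasurable.stronglyMeasurableAtFilter hcont.continuousAt).const_sub
    (gaussTail 0)
  rwa [← funext gaussTail_eq_sub] at h

lemma tendsto_gaussTail_atTop : Tendsto gaussTail atTop (𝓝 0) := by
  have h := (intervalIntegral_tendsto_integral_Ioi 0
    integrable_exp_neg_sq_div_two.integrableOn tendsto_id).const_sub (gaussTail 0)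
  simp only [id] at h
  rwa [← funext gaussTail_eq_sub, ← gaussTail, sub_self] at h

lemma integral_Ioi_abs_sub_mul_of_hasDerivAt {H e : ℝ → ℝ} {a z : ℝ} (haz : a ≤ z)
    (hH : ∀ y, HasDerivAt H ((y - z) * e y) y) (hint : Integrable fun y ↦ (y - z) * e y)
    (hlim : Tendsto H atTop (𝓝 0)) :
    ∫ y in Ioi a, |y - z| * e y = H a - 2 * H z := by
  have hIoc : EqOn (fun y ↦ |y - z| * e y) (fun y ↦ -((y - z) * e y)) (Ioc a z) := fun y hy ↦ by
    simp only [abs_of_nonpos (sub_nonpos.2 hy.2), neg_mul]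
  have hIoi : EqOn (fun y ↦ |y - z| * e y) (fun y ↦ (y - z) * e y) (Ioi z) := fun y hy ↦ by
    simp only [abs_of_pos (sub_pos.2 (mem_Ioi.1 hy))]
  rw [← Ioc_union_Ioi_eq_Ioi haz, setIntegral_union Ioc_disjoint_Ioi_same measurableSet_Ioi
      (hint.neg.integrableOn.congr_fun hIoc.symm measurableSet_Ioc)
      (hint.integrableOn.congr_fun hIoi.symm measurableSet_Ioi),
    setIntegral_congr_fun measurableSet_Ioc hIoc, setIntegral_congr_fun measurableSet_Ioi hIoi,
    integral_neg, ← intervalIntegral.integral_of_le haz,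
    intervalIntegral.integral_eq_sub_of_hasDerivAt (fun y _ ↦ hH y) hint.intervalIntegrable,
    integral_Ioi_of_hasDerivAt_of_tendsto' (fun y _ ↦ hH y) hint.integrableOn hlim]
  ring

@[fun_prop]
lemma continuous_gaussTail : Continuous gaussTail :=
  continuous_iff_continuousAt.2 fun x ↦ (hasDerivAt_gaussTail x).continuousAt

section ShiftedGaussian

variable (m : ℝ)

lemma integrable_exp_neg_sq_div_two_comp {τ : ℝ} (hτ : τ ≠ 0) :
    Integrable fun y : ℝ ↦ exp (-((y - m) / τ) ^ 2 / 2) := by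
  simpa only [sub_div] using (integrable_exp_neg_sq_div_two.comp_div hτ).comp_sub_right m

lemma integrable_sub_mul_exp_neg_sq_div_two_comp {τ : ℝ} (hτ : τ ≠ 0) :
    Integrable fun y : ℝ ↦ (y - m) * exp (-((y - m) / τ) ^ 2 / 2) := by
  have h : Integrable fun t : ℝ ↦ t * exp (-t ^ 2 / 2) := by
    simpa only [exp_neg_sq_div_two_eq] using
      integrable_mul_exp_neg_mul_sq (b := 1 / 2) (by norm_num)
  refine (((h.comp_div hτ).comp_sub_right m).const_mul τ).congr
    (Eventually.of_forall fun y ↦ ?_)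
  simp only [sub_div]
  field_simp

lemma hasDerivAt_gaussTail_comp (τ y : ℝ) :
    HasDerivAt (fun y ↦ gaussTail ((y - m) / τ)) (-exp (-((y - m) / τ) ^ 2 / 2) / τ) y := by
  have h := (hasDerivAt_gaussTail ((y - m) / τ)).comp y
    (((hasDerivAt_id y).sub_const m).div_const τ)
  simpa only [Function.comp_def, id, neg_div, mul_one_div] using h

lemma hasDerivAt_exp_neg_sq_div_two_comp (τ y : ℝ) :
    HasDerivAt (fun y ↦ exp (-((y - m) / τ) ^ 2 / 2))
      (-((y - m) / τ ^ 2) * exp (-((y - m) / τ) ^ 2 / 2)) y := by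
  have hu : HasDerivAt (fun t : ℝ ↦ exp (-t ^ 2 / 2)) (-((y - m) / τ) * exp (-((y - m) / τ) ^ 2 / 2))
      ((y - m) / τ) := by
    convert ((hasDerivAt_pow 2 ((y - m) / τ)).fun_neg.div_const 2).exp using 1
    ring
  refine (hu.comp y (((hasDerivAt_id y).sub_const m).div_const τ)).congr_deriv ?_
  ring

lemma integral_Ioi_abs_sub_mul_exp_neg_sq_div_two {τ a z : ℝ} (hτ : 0 < τ) (haz : a ≤ z) :
    ∫ y in Ioi a, |y - z| * exp (-((y - m) / τ) ^ 2 / 2) =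
      2 * τ ^ 2 * exp (-((z - m) / τ) ^ 2 / 2) - τ ^ 2 * exp (-((a - m) / τ) ^ 2 / 2) +
        (z - m) * τ * (gaussTail ((a - m) / τ) - 2 * gaussTail ((z - m) / τ)) := by
  set H : ℝ → ℝ := fun y ↦ (z - m) * τ * gaussTail ((y - m) / τ) - τ ^ 2 * exp (-((y - m) / τ) ^ 2 / 2)
  have hH : ∀ y, HasDerivAt H ((y - z) * exp (-((y - m) / τ) ^ 2 / 2)) y := fun y ↦ by
    refine (((hasDerivAt_gaussTail_comp m τ y).const_mul ((z - m) * τ)).sub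
      ((hasDerivAt_exp_neg_sq_div_two_comp m τ y).const_mul (τ ^ 2))).congr_deriv ?_
    field_simp
    ring
  have hint : Integrable fun y ↦ (y - z) * exp (-((y - m) / τ) ^ 2 / 2) := by
    refine ((integrable_sub_mul_exp_neg_sq_div_two_comp m hτ.ne').add
      ((integrable_exp_neg_sq_div_two_comp m hτ.ne').const_mul (m - z))).congr
      (Eventually.of_forall fun y ↦ ?_)
    simp only [Pi.add_apply]
    ring
  have hlim : Tendsto H atTop (𝓝 0) := by
    have hu : Tendsto (fun y ↦ (y - m) / τ) atTop atTop :=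
      (tendsto_atTop_add_const_right _ _ tendsto_id).atTop_div_const hτ
    simpa using ((tendsto_gaussTail_atTop.comp hu).const_mul ((z - m) * τ)).sub
      ((tendsto_exp_neg_sq_div_two_atTop.comp hu).const_mul (τ ^ 2))
  rw [integral_Ioi_abs_sub_mul_of_hasDerivAt haz hH hint hlim]
  simp only [H]
  ring

end ShiftedGaussian

section HalfLineMoments

variable {σ c r : ℝ}

lemma exp_mul_exp_eq (hr : r ^ 2 = 1 / σ ^ 2 + c ^ 2) (z : ℝ) :
    exp (-(z / σ) ^ 2 / 2) * exp (-(c * z) ^ 2 / 2) = exp (-(r ^ 2 / 2) * z ^ 2) := by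
  rw [← exp_add, hr]
  congr 1
  ring

lemma integrable_exp_mul_exp (hr0 : 0 < r) (hr : r ^ 2 = 1 / σ ^ 2 + c ^ 2) :
    Integrable fun z ↦ exp (-(z / σ) ^ 2 / 2) * exp (-(c * z) ^ 2 / 2) := by
  simpa only [exp_mul_exp_eq hr] using integrable_exp_neg_mul_sq (b := r ^ 2 / 2) (by positivity)

lemma integral_Ioi_exp_mul_exp (hr0 : 0 < r) (hr : r ^ 2 = 1 / σ ^ 2 + c ^ 2) :
    ∫ z in Ioi 0, exp (-(z / σ) ^ 2 / 2) * exp (-(c * z) ^ 2 / 2) = √(2 * π) / (2 * r) := by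
  simp only [exp_mul_exp_eq hr, integral_gaussian_Ioi]
  rw [show π / (r ^ 2 / 2) = 2 * π / r ^ 2 by field_simp, sqrt_div' _ (sq_nonneg r),
    sqrt_sq hr0.le]
  ring

lemma integrable_mul_exp_mul_gaussTail (hσ : σ ≠ 0) (c : ℝ) :
    Integrable fun z ↦ z * exp (-(z / σ) ^ 2 / 2) * gaussTail (c * z) := by
  have h := integrable_sub_mul_exp_neg_sq_div_two_comp 0 hσ
  simp only [sub_zero] at h
  refine (h.norm.const_mul √(2 * π)).mono' (by fun_prop) (Eventually.of_forall fun z ↦ ?_)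
  rw [norm_mul, mul_comm]
  exact mul_le_mul_of_nonneg_right (norm_gaussTail_le _) (norm_nonneg _)

lemma integral_Ioi_mul_exp_mul_gaussTail (hσ : 0 < σ) (hr0 : 0 < r)
    (hr : r ^ 2 = 1 / σ ^ 2 + c ^ 2) :
    ∫ z in Ioi 0, z * exp (-(z / σ) ^ 2 / 2) * gaussTail (c * z) =
      √(2 * π) * σ ^ 2 / 2 * (1 - c / r) := by
  set F : ℝ → ℝ := fun z ↦ -σ ^ 2 * (exp (-(z / σ) ^ 2 / 2) * gaussTail (c * z))
  have hF : ∀ z, HasDerivAt F (z * exp (-(z / σ) ^ 2 / 2) * gaussTail (c * z) +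
      c * σ ^ 2 * (exp (-(z / σ) ^ 2 / 2) * exp (-(c * z) ^ 2 / 2))) z := fun z ↦ by
    have hg := hasDerivAt_exp_neg_sq_div_two_comp 0 σ z
    have hΨ := (hasDerivAt_gaussTail (c * z)).comp z ((hasDerivAt_id z).const_mul c)
    simp only [sub_zero] at hg
    refine ((hg.mul hΨ).const_mul (-σ ^ 2)).congr_deriv ?_
    simp only [Function.comp_def]
    field_simp
    ring
  have hlim : Tendsto F atTop (𝓝 0) := by
    have hg := tendsto_exp_neg_sq_div_two_atTop.comp (tendsto_id.atTop_div_const hσ)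
    have hΨ : IsBoundedUnder (· ≤ ·) atTop fun z ↦ ‖gaussTail (c * z)‖ :=
      isBoundedUnder_of ⟨_, fun z ↦ norm_gaussTail_le (c * z)⟩
    simpa only [Function.comp_def, id, mul_zero] using
      (hg.zero_mul_isBoundedUnder_le hΨ).const_mul (-σ ^ 2)
  have hG := (integrable_mul_exp_mul_gaussTail hσ.ne' c).integrableOn (s := Ioi 0)
  have hE := ((integrable_exp_mul_exp hr0 hr).const_mul (c * σ ^ 2)).integrableOn (s := Ioi 0)
  have hF0 : F 0 = -σ ^ 2 * (√(2 * π) / 2) := by simp [F, gaussTail_zero]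
  have h := integral_Ioi_of_hasDerivAt_of_tendsto' (fun z _ ↦ hF z) (hG.add hE) hlim
  rw [integral_add hG hE, integral_const_mul, integral_Ioi_exp_mul_exp hr0 hr, hF0] at h
  rw [eq_sub_of_add_eq h]
  field_simp
  ring

end HalfLineMoments

section Bivariate

variable {σy σz ξ : ℝ}

lemma bvnDensity_eq_mul (hσy : σy ≠ 0) (hσz : σz ≠ 0) (hξ : |ξ| < 1) (y z : ℝ) :
    bvnDensity σy σz ξ y z = 1 / (2 * π * √(1 - ξ ^ 2) * σy * σz) * exp (-(z / σz) ^ 2 / 2) *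
      exp (-((y - ξ * σy * z / σz) / (σy * √(1 - ξ ^ 2))) ^ 2 / 2) := by
  have hξ' : 0 < 1 - ξ ^ 2 := sub_pos.2 ((sq_lt_one_iff_abs_lt_one ξ).2 hξ)
  rw [bvnDensity, mul_assoc (1 / _) (exp _), ← exp_add]
  congr 2
  field_simp
  rw [sq_sqrt hξ'.le]
  ring

lemma integral_Ioi_abs_sub_mul_bvnDensity (hσy : 0 < σy) (hσz : 0 < σz) (hξ : |ξ| < 1) {z : ℝ}
    (hz : 0 ≤ z) :
    ∫ y in Ioi 0, 2 * |y - z| * bvnDensity σy σz ξ y z =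
      σy * √(1 - ξ ^ 2) / (π * σz) *
          (2 * (exp (-(z / σz) ^ 2 / 2) *
              exp (-((σz - ξ * σy) / (σz * σy * √(1 - ξ ^ 2)) * z) ^ 2 / 2)) -
            exp (-(z / σz) ^ 2 / 2) * exp (-(-ξ / (σz * √(1 - ξ ^ 2)) * z) ^ 2 / 2)) +
        (σz - ξ * σy) / (π * σz ^ 2) *
          (z * exp (-(z / σz) ^ 2 / 2) * gaussTail (-ξ / (σz * √(1 - ξ ^ 2)) * z) -
            2 * (z * exp (-(z / σz) ^ 2 / 2) *
              gaussTail ((σz - ξ * σy) / (σz * σy * √(1 - ξ ^ 2)) * z))) := by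
  have hW : 0 < √(1 - ξ ^ 2) := sqrt_pos.2 (sub_pos.2 ((sq_lt_one_iff_abs_lt_one ξ).2 hξ))
  simp only [bvnDensity_eq_mul hσy.ne' hσz.ne' hξ]
  have h := integral_Ioi_abs_sub_mul_exp_neg_sq_div_two (ξ * σy * z / σz) (mul_pos hσy hW) hz
  have h1 : (z - ξ * σy * z / σz) / (σy * √(1 - ξ ^ 2)) =
      (σz - ξ * σy) / (σz * σy * √(1 - ξ ^ 2)) * z := by
    field_simp
  have h2 : (0 - ξ * σy * z / σz) / (σy * √(1 - ξ ^ 2)) = -ξ / (σz * √(1 - ξ ^ 2)) * z := by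
    field_simp
    ring
  rw [h1, h2] at h
  have hfactor : ∀ y, 2 * |y - z| * (1 / (2 * π * √(1 - ξ ^ 2) * σy * σz) *
      exp (-(z / σz) ^ 2 / 2) * exp (-((y - ξ * σy * z / σz) / (σy * √(1 - ξ ^ 2))) ^ 2 / 2)) =
      2 * (1 / (2 * π * √(1 - ξ ^ 2) * σy * σz)) * exp (-(z / σz) ^ 2 / 2) *
        (|y - z| * exp (-((y - ξ * σy * z / σz) / (σy * √(1 - ξ ^ 2))) ^ 2 / 2)) :=
    fun y ↦ by ring
  simp only [hfactor, integral_const_mul, h]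
  field_simp

end Bivariate

lemma integral_Ioi_gaussian_combination {σ c₁ c₂ r₁ r₂ : ℝ} (A B : ℝ) (hσ : 0 < σ)
    (hr₁0 : 0 < r₁) (hr₁ : r₁ ^ 2 = 1 / σ ^ 2 + c₁ ^ 2)
    (hr₂0 : 0 < r₂) (hr₂ : r₂ ^ 2 = 1 / σ ^ 2 + c₂ ^ 2) :
    ∫ z in Ioi 0,
      (A * (2 * (exp (-(z / σ) ^ 2 / 2) * exp (-(c₁ * z) ^ 2 / 2)) -
          exp (-(z / σ) ^ 2 / 2) * exp (-(c₂ * z) ^ 2 / 2)) +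
        B * (z * exp (-(z / σ) ^ 2 / 2) * gaussTail (c₂ * z) -
          2 * (z * exp (-(z / σ) ^ 2 / 2) * gaussTail (c₁ * z)))) =
      √(2 * π) * (A * (1 / r₁ - 1 / (2 * r₂)) + B * σ ^ 2 / 2 * (2 * c₁ / r₁ - c₂ / r₂ - 1)) := by
  have hE₁ := (integrable_exp_mul_exp hr₁0 hr₁).integrableOn (s := Ioi 0)
  have hE₂ := (integrable_exp_mul_exp hr₂0 hr₂).integrableOn (s := Ioi 0)
  have hG₁ := (integrable_mul_exp_mul_gaussTail hσ.ne' c₁).integrableOn (s := Ioi 0)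
  have hG₂ := (integrable_mul_exp_mul_gaussTail hσ.ne' c₂).integrableOn (s := Ioi 0)
  rw [integral_add, integral_const_mul, integral_const_mul, integral_sub, integral_sub,
    integral_const_mul, integral_const_mul, integral_Ioi_exp_mul_exp hr₁0 hr₁,
    integral_Ioi_exp_mul_exp hr₂0 hr₂, integral_Ioi_mul_exp_mul_gaussTail hσ hr₁0 hr₁,
    integral_Ioi_mul_exp_mul_gaussTail hσ hr₂0 hr₂]
  · ring
  exacts [hG₂, hG₁.const_mul 2, hE₁.const_mul 2, hE₂, ((hE₁.const_mul 2).sub hE₂).const_mul _,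
    (hG₂.sub (hG₁.const_mul 2)).const_mul _]

theorem stmt9 (σy σz ξ : ℝ) (hσy : 0 < σy) (hσz : 0 < σz) (hξ : |ξ| < 1) :
    (∫ z in Set.Ioi (0 : ℝ), ∫ y in Set.Ioi (0 : ℝ), 2 * |y - z| * bvnDensity σy σz ξ y z) =
      (1 / Real.sqrt (2 * π)) *
        (-(1 - ξ) * (σy + σz) + 2 * Real.sqrt (σy ^ 2 - 2 * ξ * σy * σz + σz ^ 2)) := by
  have hξ' : 0 < 1 - ξ ^ 2 := sub_pos.2 ((sq_lt_one_iff_abs_lt_one ξ).2 hξ)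
  have hs' : 0 < σy ^ 2 - 2 * ξ * σy * σz + σz ^ 2 := by
    nlinarith [sq_nonneg (σy - ξ * σz), mul_pos hξ' (pow_pos hσz 2)]
  set W := √(1 - ξ ^ 2)
  set s := √(σy ^ 2 - 2 * ξ * σy * σz + σz ^ 2)
  have hW2 : W ^ 2 = 1 - ξ ^ 2 := sq_sqrt hξ'.le
  have hs2 : s ^ 2 = σy ^ 2 - 2 * ξ * σy * σz + σz ^ 2 := sq_sqrt hs'.le
  have hW : 0 < W := sqrt_pos.2 hξ'
  have hs : 0 < s := sqrt_pos.2 hs'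
  have hr₁ : (s / (σz * σy * W)) ^ 2 = 1 / σz ^ 2 + ((σz - ξ * σy) / (σz * σy * W)) ^ 2 := by
    field_simp; rw [hs2, hW2]; ring
  have hr₂ : (1 / (σz * W)) ^ 2 = 1 / σz ^ 2 + (-ξ / (σz * W)) ^ 2 := by
    field_simp; rw [hW2]; ring
  rw [setIntegral_congr_fun measurableSet_Ioi fun z hz ↦
      integral_Ioi_abs_sub_mul_bvnDensity hσy hσz hξ (le_of_lt hz),
    integral_Ioi_gaussian_combination _ _ hσz (by positivity) hr₁ (by positivity) hr₂]
  set S := √(2 * π) with hS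
  have hπ : π = S ^ 2 / 2 := by rw [hS, sq_sqrt (by positivity)]; ring
  have hS0 : 0 < S := by positivity
  rw [hπ]
  field_simp
  linear_combination (σy * (2 * σy - s)) * hW2 - 2 * hs2
end

section
/- If (Y, Z) is centered bivariate normal with standard deviations σ_y, σ_z > 0 and correlation ξ with |ξ| < 1, then E|(Y + |Y|) - (Z + |Z|)| = (2/√(2π))·√(σ_y² - 2ξσ_yσ_z + σ_z²) (obtained by summing the contributions over the four sign quadrants of (Y,Z)). -/
/-!
Write `y⁺ = max y 0` and `y⁻ = max (-y) 0`, so that `y + |y| = 2 y⁺` and `-y + |-y| = 2 y⁻`.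
Since `|y⁺ - z⁺| + |y⁻ - z⁻| = |y - z|` and the density is invariant under `(y, z) ↦ (-y, -z)`,
symmetrizing the integrand turns the expectation into `E|Y - Z|`. In the coordinates `(Y, Z - Y)`
the density factors as the `N(0, s²)` density of `Z - Y`, with `s² = σ_y² - 2ξσ_yσ_z + σ_z²`, times
a Gaussian conditional density of `Y`; integrating out `Y` leaves the first absolute moment
`2s / √(2π)` of `N(0, s²)`.
-/

open Real

open MeasureTheory ProbabilityTheory
open scoped NNReal

lemma integral_abs_mul_exp_neg_mul_sq {b : ℝ} (hb : 0 < b) :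
    ∫ x : ℝ, |x| * rexp (-b * x ^ 2) = b⁻¹ := by
  have hIoi : ∫ x : ℝ in Set.Ioi 0, x * rexp (-b * x ^ 2) = (2 * b)⁻¹ := by
    rw [← Complex.ofReal_inj, ← integral_complex_ofReal]
    push_cast
    exact integral_mul_cexp_neg_mul_sq (by simpa using hb)
  calc ∫ x : ℝ, |x| * rexp (-b * x ^ 2)
      = ∫ x : ℝ, (fun u => u * rexp (-b * u ^ 2)) |x| := by simp only [sq_abs]
    _ = b⁻¹ := by
      rw [integral_comp_abs (f := fun u => u * rexp (-b * u ^ 2)), hIoi]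
      field_simp

section GaussianPDF

lemma gaussianPDFReal_zero_eq_mul_exp (v : ℝ≥0) (x : ℝ) :
    gaussianPDFReal 0 v x = (√(2 * π * v))⁻¹ * rexp (-(2 * v : ℝ)⁻¹ * x ^ 2) := by
  rw [gaussianPDFReal, sub_zero, neg_div, div_eq_inv_mul, neg_mul]

lemma integrable_abs_mul_gaussianPDFReal (v : ℝ≥0) :
    Integrable fun x => |x| * gaussianPDFReal 0 v x := by
  rcases eq_or_ne v 0 with rfl | hv
  · simp
  simp_rw [gaussianPDFReal_zero_eq_mul_exp, mul_left_comm |_|]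
  refine Integrable.const_mul ?_ _
  simpa [abs_mul] using (integrable_mul_exp_neg_mul_sq (b := (2 * v : ℝ)⁻¹) (by positivity)).norm

lemma integral_abs_mul_gaussianPDFReal (v : ℝ≥0) :
    ∫ x, |x| * gaussianPDFReal 0 v x = 2 / √(2 * π) * √v := by
  rcases eq_or_ne v 0 with rfl | hv
  · simp
  simp_rw [gaussianPDFReal_zero_eq_mul_exp, mul_left_comm |_|]
  rw [integral_const_mul, integral_abs_mul_exp_neg_mul_sq (by positivity),
    Real.sqrt_mul (by positivity)]
  have : 0 < √(v : ℝ) := by positivity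
  field_simp
  exact (Real.sq_sqrt v.coe_nonneg).symm

variable {f m : ℝ → ℝ} {w : ℝ≥0}

lemma integrable_gaussianPDFReal_mul_prod (hf : Integrable f) (hm : Measurable m) (hw : w ≠ 0) :
    Integrable fun p : ℝ × ℝ => gaussianPDFReal (m p.2) w p.1 * f p.2 := by
  have hmeas : AEStronglyMeasurable (fun p : ℝ × ℝ => gaussianPDFReal (m p.2) w p.1 * f p.2)
      ((volume : Measure ℝ).prod (volume : Measure ℝ)) := by
    refine AEStronglyMeasurable.mul ?_ hf.1.comp_snd
    exact (measurable_uncurry_gaussianPDFReal.comp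
      (by fun_prop : Measurable fun p : ℝ × ℝ => (m p.2, w, p.1))).aestronglyMeasurable
  rw [Measure.volume_eq_prod, integrable_prod_iff' hmeas]
  refine ⟨.of_forall fun y => (integrable_gaussianPDFReal (m y) w).mul_const (f y), ?_⟩
  simp_rw [norm_mul, integral_mul_const, Real.norm_of_nonneg (gaussianPDFReal_nonneg _ _ _),
    integral_gaussianPDFReal_eq_one _ hw, one_mul]
  exact hf.norm

lemma integral_gaussianPDFReal_mul_prod (hf : Integrable f) (hm : Measurable m) (hw : w ≠ 0) :
    ∫ p : ℝ × ℝ, gaussianPDFReal (m p.2) w p.1 * f p.2 = ∫ y, f y := by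
  have := integrable_gaussianPDFReal_mul_prod hf hm hw
  rw [Measure.volume_eq_prod] at this ⊢
  simp_rw [integral_prod_symm _ this, integral_mul_const, integral_gaussianPDFReal_eq_one _ hw,
    one_mul]

end GaussianPDF

lemma integral_eq_of_add_comp_neg {G : Type*} [MeasurableSpace G] [AddGroup G] [MeasurableNeg G]
    {μ : Measure G} [μ.IsNegInvariant] {f g : G → ℝ} (hf₀ : 0 ≤ f)
    (hf : AEStronglyMeasurable f μ) (hg : Integrable g μ) (hfg : ∀ x, f x + f (-x) = 2 * g x) :
    ∫ x, f x ∂μ = ∫ x, g x ∂μ := by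
  have hfi : Integrable f μ := (hg.const_mul 2).mono' hf <| .of_forall fun x => by
    rw [Real.norm_of_nonneg (hf₀ x), ← hfg]
    exact le_add_of_nonneg_right (hf₀ _)
  have h := integral_add hfi hfi.comp_neg
  rw [integral_neg_eq_self, funext hfg, integral_const_mul] at h
  linarith

lemma abs_add_abs_sub_add_abs_add_abs_neg (y z : ℝ) :
    |(y + |y|) - (z + |z|)| + |(-y + |-y|) - (-z + |-z|)| = 2 * |y - z| := by
  simp only [abs_neg]
  rcases abs_cases y with ⟨hy, _⟩ | ⟨hy, _⟩ <;> rcases abs_cases z with ⟨hz, _⟩ | ⟨hz, _⟩ <;>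
    rw [hy, hz] <;> grind

lemma one_sub_sq_pos_of_abs_lt_one {ξ : ℝ} (hξ : |ξ| < 1) : 0 < 1 - ξ ^ 2 := by
  nlinarith [abs_nonneg ξ, sq_abs ξ]

lemma sq_sub_two_mul_mul_add_sq_pos {σy σz ξ : ℝ} (hσz : σz ≠ 0) (hξ : |ξ| < 1) :
    0 < σy ^ 2 - 2 * ξ * σy * σz + σz ^ 2 := by
  nlinarith [sq_nonneg (σy - ξ * σz), mul_pos (one_sub_sq_pos_of_abs_lt_one hξ) (pow_pos
    (abs_pos.2 hσz) 2), sq_abs σz]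

lemma one_sub_sq_mul_sq_mul_sq_div_pos {σy σz ξ : ℝ} (hσy : σy ≠ 0) (hσz : σz ≠ 0)
    (hξ : |ξ| < 1) : 0 < (1 - ξ ^ 2) * σy ^ 2 * σz ^ 2 / (σy ^ 2 - 2 * ξ * σy * σz + σz ^ 2) := by
  have := one_sub_sq_pos_of_abs_lt_one hξ
  have := sq_sub_two_mul_mul_add_sq_pos (σy := σy) hσz hξ
  positivity

section BvnDensity

variable {σy σz ξ : ℝ}

lemma bvnDensity_nonneg (hσy : 0 ≤ σy) (hσz : 0 ≤ σz) (y z : ℝ) : 0 ≤ bvnDensity σy σz ξ y z := by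
  unfold bvnDensity
  positivity

lemma bvnDensity_neg (y z : ℝ) : bvnDensity σy σz ξ (-y) (-z) = bvnDensity σy σz ξ y z := by
  unfold bvnDensity
  ring_nf

@[fun_prop]
lemma Continuous.bvnDensity {α : Type*} [TopologicalSpace α] {f g : α → ℝ} (hf : Continuous f)
    (hg : Continuous g) : Continuous fun x => bvnDensity σy σz ξ (f x) (g x) := by
  unfold _root_.bvnDensity
  fun_prop

lemma bvnDensity_self_add (hσy : 0 < σy) (hσz : 0 < σz) (hξ : |ξ| < 1) (x y : ℝ) :
    bvnDensity σy σz ξ x (x + y) =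
      gaussianPDFReal ((ξ * σy * σz - σy ^ 2) / (σy ^ 2 - 2 * ξ * σy * σz + σz ^ 2) * y)
        ((1 - ξ ^ 2) * σy ^ 2 * σz ^ 2 / (σy ^ 2 - 2 * ξ * σy * σz + σz ^ 2)).toNNReal x *
      gaussianPDFReal 0 (σy ^ 2 - 2 * ξ * σy * σz + σz ^ 2).toNNReal y := by
  have hr := one_sub_sq_pos_of_abs_lt_one hξ
  have hs := sq_sub_two_mul_mul_add_sq_pos (σy := σy) hσz.ne' hξ
  have hw := one_sub_sq_mul_sq_mul_sq_div_pos hσy.ne' hσz.ne' hξ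
  set s := σy ^ 2 - 2 * ξ * σy * σz + σz ^ 2
  rw [gaussianPDFReal, gaussianPDFReal, Real.coe_toNNReal _ hw.le, Real.coe_toNNReal _ hs.le,
    mul_mul_mul_comm, ← Real.exp_add, ← mul_inv, ← Real.sqrt_mul (by positivity)]
  have hsqrt : √(2 * π * ((1 - ξ ^ 2) * σy ^ 2 * σz ^ 2 / s) * (2 * π * s)) =
      2 * π * √(1 - ξ ^ 2) * σy * σz := by
    rw [show 2 * π * ((1 - ξ ^ 2) * σy ^ 2 * σz ^ 2 / s) * (2 * π * s) =
        (2 * π * σy * σz) ^ 2 * (1 - ξ ^ 2) by field_simp,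
      Real.sqrt_mul (by positivity), Real.sqrt_sq (by positivity)]
    ring
  rw [hsqrt, bvnDensity, one_div]
  congr 2
  field_simp
  simp only [s]
  ring

lemma abs_sub_mul_bvnDensity_self_add (hσy : 0 < σy) (hσz : 0 < σz) (hξ : |ξ| < 1) (x y : ℝ) :
    |x - (x + y)| * bvnDensity σy σz ξ x (x + y) =
      gaussianPDFReal ((ξ * σy * σz - σy ^ 2) / (σy ^ 2 - 2 * ξ * σy * σz + σz ^ 2) * y)
          ((1 - ξ ^ 2) * σy ^ 2 * σz ^ 2 / (σy ^ 2 - 2 * ξ * σy * σz + σz ^ 2)).toNNReal x *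
        (|y| * gaussianPDFReal 0 (σy ^ 2 - 2 * ξ * σy * σz + σz ^ 2).toNNReal y) := by
  rw [bvnDensity_self_add hσy hσz hξ, sub_add_cancel_left, abs_neg]
  ring

end BvnDensity

lemma integrable_abs_sub_mul_bvnDensity {σy σz ξ : ℝ} (hσy : 0 < σy) (hσz : 0 < σz)
    (hξ : |ξ| < 1) : Integrable fun p : ℝ × ℝ => |p.1 - p.2| * bvnDensity σy σz ξ p.1 p.2 := by
  have hmeas : AEStronglyMeasurable fun p : ℝ × ℝ => |p.1 - p.2| * bvnDensity σy σz ξ p.1 p.2 :=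
    (by fun_prop : Continuous _).aestronglyMeasurable
  have hw := one_sub_sq_mul_sq_mul_sq_div_pos hσy.ne' hσz.ne' hξ
  have hT : MeasurePreserving fun p : ℝ × ℝ => (p.1, p.1 + p.2) :=
    measurePreserving_prod_add volume volume
  rw [← hT.integrable_comp hmeas]
  simp only [Function.comp_def, abs_sub_mul_bvnDensity_self_add hσy hσz hξ]
  exact integrable_gaussianPDFReal_mul_prod (integrable_abs_mul_gaussianPDFReal _) (by fun_prop)
    (Real.toNNReal_pos.2 hw).ne'

lemma integral_abs_sub_mul_bvnDensity {σy σz ξ : ℝ} (hσy : 0 < σy) (hσz : 0 < σz)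
    (hξ : |ξ| < 1) :
    ∫ p : ℝ × ℝ, |p.1 - p.2| * bvnDensity σy σz ξ p.1 p.2 =
      2 / √(2 * π) * √(σy ^ 2 - 2 * ξ * σy * σz + σz ^ 2) := by
  have hs := sq_sub_two_mul_mul_add_sq_pos (σy := σy) hσz.ne' hξ
  have hw := one_sub_sq_mul_sq_mul_sq_div_pos hσy.ne' hσz.ne' hξ
  have hT : MeasurePreserving fun p : ℝ × ℝ => (p.1, p.1 + p.2) :=
    measurePreserving_prod_add volume volume
  rw [← hT.integral_comp (MeasurableEquiv.shearAddRight ℝ).measurableEmbedding]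
  simp only [abs_sub_mul_bvnDensity_self_add hσy hσz hξ]
  rw [integral_gaussianPDFReal_mul_prod (integrable_abs_mul_gaussianPDFReal _) (by fun_prop)
    (Real.toNNReal_pos.2 hw).ne', integral_abs_mul_gaussianPDFReal, Real.coe_toNNReal _ hs.le]

theorem stmt11 (σy σz ξ : ℝ) (hσy : 0 < σy) (hσz : 0 < σz) (hξ : |ξ| < 1) :
    (∫ p : ℝ × ℝ, |(p.1 + |p.1|) - (p.2 + |p.2|)| * bvnDensity σy σz ξ p.1 p.2) =
      (2 / Real.sqrt (2 * π)) * Real.sqrt (σy ^ 2 - 2 * ξ * σy * σz + σz ^ 2) := by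
  rw [← integral_abs_sub_mul_bvnDensity hσy hσz hξ]
  refine integral_eq_of_add_comp_neg
    (fun p => mul_nonneg (abs_nonneg _) (bvnDensity_nonneg hσy.le hσz.le _ _)) ?_
    (integrable_abs_sub_mul_bvnDensity hσy hσz hξ) fun p => ?_
  · exact (by fun_prop : Continuous _).aestronglyMeasurable
  · simp only [Prod.fst_neg, Prod.snd_neg, bvnDensity_neg]
    rw [← add_mul, abs_add_abs_sub_add_abs_add_abs_neg, mul_assoc]
end

section
/- The function g(ρ) = √((1-ρ)/π) + √((1-ρ²)/(4π)) on the open interval (-1, 1) attains its unique maximum at ρ = (1-√5)/2. -/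
open Real

noncomputable def g (ρ : ℝ) : ℝ :=
  Real.sqrt ((1 - ρ) / π) + Real.sqrt ((1 - ρ ^ 2) / (4 * π))

/-!
Substituting `b = √(1 + ρ)`, so that `1 - ρ = 2 - b²`, turns `g ρ` into `√(q b / (4π))` with
`q b = (2 - b²)(2 + b)²`. With `c = -ψ = φ⁻¹` the positive root of `c² = 1 - c`, one has the factorisation
`q c - q b = (b - c)² (b² + (4 + 2c) b + 5 + 5c)`, whose second factor is positive for `b ≥ 0`.
So on `b ≥ 0` the quartic `q` has its strict maximum at `b = -ψ`, i.e. at `ρ = (-ψ)² - 1 = ψ`.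
-/

open scoped goldenRatio

lemma g_eq_sqrt (ρ : ℝ) (h₁ : -1 ≤ ρ) (h₂ : ρ ≤ 1) :
    g ρ = √((2 - √(1 + ρ) ^ 2) * (2 + √(1 + ρ)) ^ 2 / (4 * π)) := by
  have hb : √(1 + ρ) ^ 2 = 1 + ρ := sq_sqrt (by linarith)
  have hb0 : 0 ≤ √(1 + ρ) := sqrt_nonneg _
  have hu : 0 ≤ (1 - ρ) / π := div_nonneg (by linarith) pi_pos.le
  have hsplit : (1 - ρ ^ 2) / (4 * π) = (1 - ρ) / π * (√(1 + ρ) / 2) ^ 2 := by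
    rw [div_pow, hb]; field_simp; ring
  have hfull : (2 - √(1 + ρ) ^ 2) * (2 + √(1 + ρ)) ^ 2 / (4 * π)
      = (1 - ρ) / π * ((2 + √(1 + ρ)) / 2) ^ 2 := by
    rw [hb]; field_simp; ring
  rw [g, hsplit, hfull, sqrt_mul hu, sqrt_mul hu, sqrt_sq (by positivity),
    sqrt_sq (by positivity)]
  ring

lemma quartic_lt_at_neg_goldenConj (b : ℝ) (hb : 0 ≤ b) (hne : b ≠ -ψ) :
    (2 - b ^ 2) * (2 + b) ^ 2 < (2 - ψ ^ 2) * (2 - ψ) ^ 2 := by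
  have hψ : ψ < 0 := goldenConj_neg
  have hgap : 0 < (b + ψ) ^ 2 := by
    have : b + ψ ≠ 0 := fun h => hne (by linarith)
    positivity
  have hfactor : 0 < b ^ 2 + (4 - 2 * ψ) * b + 5 - 5 * ψ := by nlinarith
  have hdiff : (2 - ψ ^ 2) * (2 - ψ) ^ 2 - (2 - b ^ 2) * (2 + b) ^ 2
      = (b + ψ) ^ 2 * (b ^ 2 + (4 - 2 * ψ) * b + 5 - 5 * ψ) := by
    linear_combination (3 * b ^ 2 + (2 * ψ + 8) * b - ψ ^ 2 + 8 * ψ) * goldenConj_sq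
  linarith [mul_pos hgap hfactor]

lemma sqrt_one_add_goldenConj : √(1 + ψ) = -ψ := by
  rw [add_comm, ← goldenConj_sq, sqrt_sq_eq_abs, abs_of_neg goldenConj_neg]

theorem stmt15 :
    (1 - Real.sqrt 5) / 2 ∈ Set.Ioo (-1 : ℝ) 1 ∧
    ∀ ρ ∈ Set.Ioo (-1 : ℝ) 1, ρ ≠ (1 - Real.sqrt 5) / 2 →
      g ρ < g ((1 - Real.sqrt 5) / 2) := by
  change ψ ∈ Set.Ioo (-1 : ℝ) 1 ∧ ∀ ρ ∈ Set.Ioo (-1 : ℝ) 1, ρ ≠ ψ → g ρ < g ψ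
  have hψ : ψ < 0 := goldenConj_neg
  refine ⟨⟨neg_one_lt_goldenConj, by linarith⟩, fun ρ ⟨h₁, h₂⟩ hne => ?_⟩
  have hb : √(1 + ρ) ^ 2 = 1 + ρ := sq_sqrt (by linarith)
  have hbne : √(1 + ρ) ≠ -ψ := fun h => hne (by nlinarith [goldenConj_sq])
  rw [g_eq_sqrt ρ h₁.le h₂.le, g_eq_sqrt ψ neg_one_lt_goldenConj.le (by linarith),
    sqrt_one_add_goldenConj, neg_sq]
  refine sqrt_lt_sqrt (div_nonneg (mul_nonneg (by linarith) (sq_nonneg _)) (by positivity)) ?_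
  exact div_lt_div_of_pos_right (quartic_lt_at_neg_goldenConj _ (sqrt_nonneg _) hbne)
    (by positivity)
end
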